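/- arXiv:1707.02524 — 6 statements merged into one kernel-verified Lean document; each statement's English description precedes it below -/
import Mathlib

section
/- Let ψ, φ : I → ℝ be C² with φ > 0 on I, both solving (1/2)σ²u'' + μu' - ru = 0, with F = ψ/φ strictly increasing. If h : I → ℝ is C² and H is defined by H(F(x)) = h(x)/φ(x), then H''(F(x)) = (2 / (σ(x)² φ(x) F'(x)²)) · ((1/2)σ(x)²h''(x) + μ(x)h'(x) - r h(x)) for all x ∈ I. -/
/-!
Near `F x` the function `H` is `G ∘ F⁻¹` with `G = h / φ`, so two applications of the chain
rule through the local inverse give `H''(F x) = (G'' F' - G' F'') / F'³`. Writing `ψ = φ F` and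
`h = φ G`, the Leibniz rule and `(L - r) φ = 0` give
`0 = ½σ²(2φ'F' + φF'') + μφF'` and `(L - r) h = ½σ²(2φ'G' + φG'') + μφG'`;
eliminating `φ'` between them yields `F' (L - r) h = ½σ²φ (G''F' - G'F'')`.
-/

open Set Filter Topology

theorem HasStrictDerivAt.hasDerivAt_of_comp_eq {𝕜 : Type*} [NontriviallyNormedField 𝕜]
    [CompleteSpace 𝕜] {F G K : 𝕜 → 𝕜} {F' G' x : 𝕜} (hF : HasStrictDerivAt F F' x)
    (hF' : F' ≠ 0) (hG : HasDerivAt G G' x) (hKFG : ∀ᶠ y in 𝓝 x, K (F y) = G y) :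
    HasDerivAt K (G' / F') (F x) := by
  set g := hF.localInverse F F' x hF'
  have hgx : g (F x) = x := (hF.eventually_left_inverse hF').self_of_nhds
  have hg : HasDerivAt g F'⁻¹ (F x) := (hF.to_localInverse hF').hasDerivAt
  have hKFg : ∀ᶠ y in 𝓝 (F x), K (F (g y)) = G (g y) :=
    hg.continuousAt.tendsto.eventually (hgx ▸ hKFG)
  have hKg : K =ᶠ[𝓝 (F x)] G ∘ g := by
    filter_upwards [hKFg, hF.eventually_right_inverse hF'] with y hKy hFy
    rwa [hFy] at hKy
  rw [div_eq_mul_inv]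
  exact ((hgx ▸ hG).comp (F x) hg).congr_of_eventuallyEq hKg

section
variable {𝕜 : Type*} [RCLike 𝕜] {f : 𝕜 → 𝕜} {s : Set 𝕜} {x : 𝕜}

theorem ContDiffOn.hasDerivAt_deriv (hs : IsOpen s) (hf : ContDiffOn 𝕜 2 f s) (hx : x ∈ s) :
    HasDerivAt (deriv f) (deriv (deriv f) x) x :=
  (((hf.deriv_of_isOpen hs (m := 1) (by norm_num)).contDiffAt (hs.mem_nhds hx)).differentiableAt
    one_ne_zero).hasDerivAt

theorem deriv_deriv_of_comp_eq {F G K : 𝕜 → 𝕜} (hs : IsOpen s) (hF : ContDiffOn 𝕜 2 F s)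
    (hG : ContDiffOn 𝕜 2 G s) (hF' : ∀ y ∈ s, deriv F y ≠ 0) (hKFG : ∀ y ∈ s, K (F y) = G y)
    (hx : x ∈ s) :
    deriv (deriv K) (F x) =
      (deriv (deriv G) x * deriv F x - deriv G x * deriv (deriv F) x) / deriv F x ^ 3 := by
  have hF_strict : ∀ y ∈ s, HasStrictDerivAt F (deriv F y) y := fun y hy =>
    (hF.contDiffAt (hs.mem_nhds hy)).hasStrictDerivAt two_ne_zero
  have hK' : ∀ y ∈ s, deriv K (F y) = deriv G y / deriv F y := fun y hy =>
    ((hF_strict y hy).hasDerivAt_of_comp_eq (hF' y hy)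
      (((hG.contDiffAt (hs.mem_nhds hy)).differentiableAt two_ne_zero).hasDerivAt)
      (eventually_of_mem (hs.mem_nhds hy) hKFG)).deriv
  have hK'' := (hF_strict x hx).hasDerivAt_of_comp_eq (hF' x hx)
    ((hG.hasDerivAt_deriv hs hx).div (hF.hasDerivAt_deriv hs hx) (hF' x hx))
    (eventually_of_mem (hs.mem_nhds hx) hK')
  rw [hK''.deriv]
  field_simp

theorem deriv_deriv_mul {g : 𝕜 → 𝕜} (hf : ContDiffAt 𝕜 2 f x) (hg : ContDiffAt 𝕜 2 g x) :
    deriv (deriv fun y => f y * g y) x =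
      deriv (deriv f) x * g x + 2 * deriv f x * deriv g x + f x * deriv (deriv g) x := by
  have h := iteratedDeriv_fun_mul hf hg
  simp only [iteratedDeriv_succ, iteratedDeriv_zero, Finset.sum_range_succ, Finset.range_one,
    Finset.sum_singleton, Nat.choose_zero_right, Nat.choose_succ_self_right, Nat.choose_self,
    Nat.cast_one, one_mul, tsub_zero, Nat.add_one_sub_one, tsub_self] at h
  rw [h]; ring

end

/-- `(L - r) u` for the generator `L = ½σ²∂² + μ∂` of the diffusion. -/
noncomputable def killedGenerator (σ μ : ℝ → ℝ) (r : ℝ) (u : ℝ → ℝ) (x : ℝ) : ℝ :=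
  (1/2) * σ x ^ 2 * deriv (deriv u) x + μ x * deriv u x - r * u x

section
variable {σ μ u v : ℝ → ℝ} {r x : ℝ}

theorem killedGenerator_congr (huv : u =ᶠ[𝓝 x] v) :
    killedGenerator σ μ r u x = killedGenerator σ μ r v x := by
  simp only [killedGenerator, huv.deriv_eq, huv.deriv.deriv_eq, huv.eq_of_nhds]

theorem killedGenerator_mul {φ : ℝ → ℝ} (hφ : ContDiffAt ℝ 2 φ x) (hu : ContDiffAt ℝ 2 u x) :
    killedGenerator σ μ r (fun y => φ y * u y) x = u x * killedGenerator σ μ r φ x +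
      (1/2) * σ x ^ 2 * (2 * deriv φ x * deriv u x + φ x * deriv (deriv u) x)
      + μ x * φ x * deriv u x := by
  simp only [killedGenerator, deriv_deriv_mul hφ hu,
    deriv_fun_mul (hφ.differentiableAt two_ne_zero) (hu.differentiableAt two_ne_zero)]
  ring

end

theorem stmt_1_general (a b r : ℝ)
    (μ σ ψ φ h F H : ℝ → ℝ)
    (hσpos : ∀ x ∈ Set.Ioo a b, 0 < σ x)
    (hφpos : ∀ x ∈ Set.Ioo a b, 0 < φ x)
    (hψC2 : ContDiffOn ℝ 2 ψ (Set.Ioo a b)) (hφC2 : ContDiffOn ℝ 2 φ (Set.Ioo a b))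
    (hhC2 : ContDiffOn ℝ 2 h (Set.Ioo a b))
    (hψode : ∀ x ∈ Set.Ioo a b,
      (1/2) * (σ x)^2 * deriv (deriv ψ) x + μ x * deriv ψ x - r * ψ x = 0)
    (hφode : ∀ x ∈ Set.Ioo a b,
      (1/2) * (σ x)^2 * deriv (deriv φ) x + μ x * deriv φ x - r * φ x = 0)
    (hF : ∀ x ∈ Set.Ioo a b, F x = ψ x / φ x)
    (hF' : ∀ x ∈ Set.Ioo a b, 0 < deriv F x)
    (hH : ∀ x ∈ Set.Ioo a b, H (F x) = h x / φ x) :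
    ∀ x ∈ Set.Ioo a b,
      deriv (deriv H) (F x)
        = (2 / ((σ x)^2 * φ x * (deriv F x)^2)) *
            ((1/2) * (σ x)^2 * deriv (deriv h) x + μ x * deriv h x - r * h x) := by
  intro x hx
  have hs : Ioo a b ∈ 𝓝 x := isOpen_Ioo.mem_nhds hx
  have hφ0 : ∀ y ∈ Ioo a b, φ y ≠ 0 := fun y hy => (hφpos y hy).ne'
  set G : ℝ → ℝ := fun y => h y / φ y
  have hFC2 : ContDiffOn ℝ 2 F (Ioo a b) := (hψC2.div hφC2 hφ0).congr hF
  have hGC2 : ContDiffOn ℝ 2 G (Ioo a b) := hhC2.div hφC2 hφ0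
  have hLφ : killedGenerator σ μ r φ x = 0 := hφode x hx
  have hLψ : (1/2) * σ x ^ 2 * (2 * deriv φ x * deriv F x + φ x * deriv (deriv F) x)
      + μ x * φ x * deriv F x = 0 := by
    have hψ : ψ =ᶠ[𝓝 x] fun y => φ y * F y :=
      eventually_of_mem hs fun y hy => by
        simp only [hF y hy, mul_div_cancel₀ (ψ y) (hφ0 y hy)]
    have hψx : killedGenerator σ μ r ψ x = 0 := hψode x hx
    rwa [killedGenerator_congr hψ, killedGenerator_mul (hφC2.contDiffAt hs) (hFC2.contDiffAt hs),
      hLφ, mul_zero, zero_add] at hψx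
  have hLh : killedGenerator σ μ r h x = (1/2) * σ x ^ 2 *
      (2 * deriv φ x * deriv G x + φ x * deriv (deriv G) x) + μ x * φ x * deriv G x := by
    have hh : h =ᶠ[𝓝 x] fun y => φ y * G y :=
      eventually_of_mem hs fun y hy => (mul_div_cancel₀ (h y) (hφ0 y hy)).symm
    rw [killedGenerator_congr hh, killedGenerator_mul (hφC2.contDiffAt hs) (hGC2.contDiffAt hs),
      hLφ, mul_zero, zero_add]
  rw [deriv_deriv_of_comp_eq isOpen_Ioo hFC2 hGC2 (fun y hy => (hF' y hy).ne') hH hx]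
  change _ = _ * killedGenerator σ μ r h x
  have hσx := (hσpos x hx).ne'
  have hF'x := (hF' x hx).ne'
  rw [hLh]
  field_simp [hφ0 x hx]
  linear_combination (-2 * deriv G x) * hLψ

/-- Second-derivative formula: if `H(F(x)) = h(x)/φ(x)` with `F = ψ/φ`, then
`H''(F(x)) = (2/(σ(x)²φ(x)F'(x)²)) · ((L-r)h)(x)`. -/
theorem stmt_1 (a b r : ℝ) (ha : 0 ≤ a) (hab : a < b) (hr : 0 < r)
    (μ σ ψ φ h F H : ℝ → ℝ)
    (hσpos : ∀ x ∈ Set.Ioo a b, 0 < σ x)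
    (hφpos : ∀ x ∈ Set.Ioo a b, 0 < φ x)
    (hψC2 : ContDiffOn ℝ 2 ψ (Set.Ioo a b)) (hφC2 : ContDiffOn ℝ 2 φ (Set.Ioo a b))
    (hhC2 : ContDiffOn ℝ 2 h (Set.Ioo a b))
    (hψode : ∀ x ∈ Set.Ioo a b,
      (1/2) * (σ x)^2 * deriv (deriv ψ) x + μ x * deriv ψ x - r * ψ x = 0)
    (hφode : ∀ x ∈ Set.Ioo a b,
      (1/2) * (σ x)^2 * deriv (deriv φ) x + μ x * deriv φ x - r * φ x = 0)
    (hF : ∀ x ∈ Set.Ioo a b, F x = ψ x / φ x)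
    (hF' : ∀ x ∈ Set.Ioo a b, 0 < deriv F x)
    (hFmono : StrictMonoOn F (Set.Ioo a b))
    (hH : ∀ x ∈ Set.Ioo a b, H (F x) = h x / φ x) :
    ∀ x ∈ Set.Ioo a b,
      deriv (deriv H) (F x)
        = (2 / ((σ x)^2 * φ x * (deriv F x)^2)) *
            ((1/2) * (σ x)^2 * deriv (deriv h) x + μ x * deriv h x - r * h x) :=
  stmt_1_general a b r μ σ ψ φ h F H hσpos hφpos hψC2 hφC2 hhC2 hψode hφode hF hF' hH
end

section
/- Let G : [0,∞) → ℝ be continuous with G(0) = 0, differentiable on (0,∞) \ {a} for some a > 0, strictly concave on (0,a), with lim_{y→0⁺} 1/G'(y) = 0 (i.e. G'(0⁺) = +∞). Let T be the set of points (y,v) with y > 0 lying on some tangent line L_z(y) = G'(z)(y - z) + G(z) with z ∈ (0,a] (using the left derivative at a). Then T equals the set X = {(y,v) : y > 0, v ≥ G̃(y)}, where G̃(y) = G(y) for 0 < y < a and G̃(y) = G'(a⁻)(y - a) + G(a) for y ≥ a. -/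
/-!
By concavity every tangent line lies above the graph of `G` on `(0, a]` (concavity extends to
`a` by left continuity there), and the tangent slopes decrease to `G'(a⁻)`; this gives
`G̃ ≤ L_z` on `(0, ∞)`. Conversely, for fixed `y > 0` the map `z ↦ L_z(y)` is continuous on
`(0, a]`: the derivative of a differentiable strictly concave function is continuous by
Darboux's theorem, and it tends to the left derivative at `a`. This map tends to `+∞` as
`z → 0⁺` because `G'` does, and equals `G̃(y)` at `z = min y a`, so the intermediate value
theorem produces a tangent line through any `(y, v)` with `v ≥ G̃(y)`.
-/

open Set Filter
open scoped Topology

theorem ConcaveOn.le_mul_sub_add_of_hasDerivWithinAt {S : Set ℝ} {f : ℝ → ℝ} {f' x y : ℝ}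
    (hf : ConcaveOn ℝ S f) (hx : x ∈ S) (hy : y ∈ S) (hf' : HasDerivWithinAt f f' S x) :
    f y ≤ f' * (y - x) + f x := by
  rcases lt_trichotomy y x with hyx | rfl | hxy
  · have h := hf.le_slope_of_hasDerivWithinAt hy hx hyx hf'
    rw [slope_def_field, le_div_iff₀ (sub_pos.2 hyx)] at h
    linarith
  · simp
  · have h := hf.slope_le_of_hasDerivWithinAt hx hy hxy hf'
    rw [slope_def_field, div_le_iff₀ (sub_pos.2 hxy)] at h
    linarith

theorem ConcaveOn.concaveOn_Ioc_of_continuousWithinAt {f : ℝ → ℝ} {p q : ℝ}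
    (hf : ConcaveOn ℝ (Ioo p q) f) (hq : ContinuousWithinAt f (Iio q) q) :
    ConcaveOn ℝ (Ioc p q) f := by
  refine concaveOn_iff_slope_anti_adjacent.2 ⟨convex_Ioc p q, fun x y z hx hz hxy hyz => ?_⟩
  have hx' : x ∈ Ioo p q := ⟨hx.1, hxy.trans (hyz.trans_le hz.2)⟩
  rcases hz.2.lt_or_eq with hzq | rfl
  · exact hf.slope_anti_adjacent hx' ⟨hx.1.trans (hxy.trans hyz), hzq⟩ hxy hyz
  · have hlim : Tendsto (fun w => (f w - f y) / (w - y)) (𝓝[<] z)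
        (𝓝 ((f z - f y) / (z - y))) :=
      (hq.sub continuousWithinAt_const).div
        (continuousWithinAt_id.sub continuousWithinAt_const) (sub_ne_zero.2 hyz.ne')
    refine le_of_tendsto hlim ?_
    filter_upwards [Ioo_mem_nhdsLT hyz] with w hw
    exact hf.slope_anti_adjacent hx' ⟨hx.1.trans (hxy.trans hw.1), hw.2⟩ hxy hw.1

theorem StrictConvexOn.continuousOn_deriv {S : Set ℝ} {f : ℝ → ℝ} (hS : IsOpen S)
    (hf : StrictConvexOn ℝ S f) (hfd : ∀ x ∈ S, DifferentiableAt ℝ f x) :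
    ContinuousOn (deriv f) S := by
  intro x hx
  obtain ⟨l, u, ⟨hlx, hxu⟩, hlu⟩ := mem_nhds_iff_exists_Ioo_subset.1 (hS.mem_nhds hx)
  obtain ⟨l', hll', hl'x⟩ := exists_between hlx
  obtain ⟨u', hxu', hu'u⟩ := exists_between hxu
  have hl' : l' ∈ S := hlu ⟨hll', hl'x.trans hxu⟩
  have hu' : u' ∈ S := hlu ⟨hlx.trans hxu', hu'u⟩
  have hmono := hf.strictMonoOn_deriv hfd
  refine (hmono.continuousAt_of_image_mem_nhds (hS.mem_nhds hx) ?_).continuousWithinAt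
  -- Darboux: the image of `S` under `deriv f` is order-connected
  refine mem_of_superset (Icc_mem_nhds (hmono hl' hx hl'x) (hmono hx hu' hxu')) ?_
  exact (hf.1.ordConnected.image_deriv hfd).out (mem_image_of_mem _ hl') (mem_image_of_mem _ hu')

theorem StrictConcaveOn.continuousOn_deriv {S : Set ℝ} {f : ℝ → ℝ} (hS : IsOpen S)
    (hf : StrictConcaveOn ℝ S f) (hfd : ∀ x ∈ S, DifferentiableAt ℝ f x) :
    ContinuousOn (deriv f) S := by
  have h := hf.neg.continuousOn_deriv hS fun x hx => (hfd x hx).neg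
  rw [deriv.neg'] at h
  exact continuousOn_neg_iff.1 h

theorem ConcaveOn.tendsto_deriv_nhdsLT {f : ℝ → ℝ} {p q D : ℝ} (hpq : p < q)
    (hf : ConcaveOn ℝ (Ioc p q) f) (hfd : ∀ x ∈ Ioo p q, DifferentiableAt ℝ f x)
    (hD : HasDerivWithinAt f D (Iio q) q) :
    Tendsto (deriv f) (𝓝[<] q) (𝓝 D) := by
  have hslope : Tendsto (slope f q) (𝓝[<] q) (𝓝 D) :=
    (hasDerivWithinAt_iff_tendsto_slope' self_notMem_Iio).1 hD
  have hreflect : Tendsto (fun z => 2 * z - q) (𝓝[<] q) (𝓝[<] q) := by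
    refine tendsto_nhdsWithin_of_tendsto_nhds_of_eventually_within _ ?_ ?_
    · exact (Continuous.tendsto' (by fun_prop) q q (by ring)).mono_left nhdsWithin_le_nhds
    · filter_upwards [self_mem_nhdsWithin] with z (hz : z < q)
      show 2 * z - q < q
      linarith
  have hupper : Tendsto (fun z => 2 * slope f q (2 * z - q) - slope f q z) (𝓝[<] q)
      (𝓝 (2 * D - D)) :=
    ((hslope.comp hreflect).const_mul 2).sub hslope
  rw [two_mul, add_sub_cancel_right] at hupper
  refine tendsto_of_tendsto_of_tendsto_of_le_of_le' hslope hupper ?_ ?_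
  · filter_upwards [Ioo_mem_nhdsLT hpq] with z hz
    rw [slope_comm]
    exact hf.slope_le_deriv ⟨hz.1, hz.2.le⟩ ⟨hpq, le_rfl⟩ hz.2 (hfd z hz)
  · filter_upwards [Ioo_mem_nhdsLT (by linarith : (p + q) / 2 < q)] with z hz
    have hw : 2 * z - q ∈ Ioc p q := ⟨by linarith [hz.1], by linarith [hz.2]⟩
    have hz' : z ∈ Ioo p q := ⟨by linarith [hz.1], hz.2⟩
    -- `z` is the midpoint of `[2z - q, q]`, so the slope over `[2z - q, z]` is
    -- twice the slope over `[2z - q, q]` minus the slope over `[z, q]`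
    have hmid : slope f (2 * z - q) z = 2 * slope f q (2 * z - q) - slope f q z := by
      have h₁ : z - q ≠ 0 := sub_ne_zero.2 hz.2.ne
      have h₂ : z - (2 * z - q) ≠ 0 := by intro h; apply h₁; linarith
      have h₃ : 2 * z - q - q ≠ 0 := by intro h; apply h₁; linarith
      simp only [slope_def_field]
      field_simp
      ring
    rw [← hmid]
    exact hf.deriv_le_slope hw ⟨hz'.1, hz.2.le⟩ (by linarith [hz.2]) (hfd z hz')

theorem continuousOn_Ioc_ite_of_tendsto {f : ℝ → ℝ} {p q D : ℝ} (hpq : p < q)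
    (hf : ContinuousOn f (Ioo p q)) (hq : Tendsto f (𝓝[<] q) (𝓝 D)) :
    ContinuousOn (fun z => if z = q then D else f z) (Ioc p q) := by
  intro z hz
  rcases hz.2.lt_or_eq with hzq | rfl
  · refine ((hf.continuousAt (Ioo_mem_nhds hz.1 hzq)).congr ?_).continuousWithinAt
    filter_upwards [Iio_mem_nhds hzq] with w (hw : w < q)
    rw [if_neg hw.ne]
  · rw [continuousWithinAt_Ioc_iff_Iic hpq, ← continuousWithinAt_Iio_iff_Iic,
      ContinuousWithinAt, if_pos rfl]
    refine hq.congr' ?_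
    filter_upwards [self_mem_nhdsWithin] with w (hw : w < z)
    rw [if_neg hw.ne]

section Tangents

variable {G s : ℝ → ℝ} {p q y : ℝ}

theorem envelope_le_tangent (hG : ConcaveOn ℝ (Ioc p q) G)
    (hs : ∀ z ∈ Ioc p q, HasDerivWithinAt G (s z) (Ioc p q) z) (hpy : p < y) {z : ℝ}
    (hz : z ∈ Ioc p q) :
    (if y < q then G y else s q * (y - q) + G q) ≤ s z * (y - z) + G z := by
  have hq : q ∈ Ioc p q := ⟨hz.1.trans_le hz.2, le_rfl⟩
  split_ifs with hyq
  · exact hG.le_mul_sub_add_of_hasDerivWithinAt hz ⟨hpy, hyq.le⟩ (hs z hz)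
  · have hGq := hG.le_mul_sub_add_of_hasDerivWithinAt hz hq (hs z hz)
    have hsq : s q ≤ s z := by
      rcases hz.2.lt_or_eq with hzq | rfl
      · exact (hG.le_slope_of_hasDerivWithinAt hz hq hzq (hs q hq)).trans
          (hG.slope_le_of_hasDerivWithinAt hz hq hzq (hs z hz))
      · exact le_rfl
    nlinarith [mul_le_mul_of_nonneg_right hsq (sub_nonneg.2 (not_lt.1 hyq))]

theorem tendsto_tangent_atTop (hpq : p < q) (hG : ConcaveOn ℝ (Ioc p q) G)
    (hs : ∀ z ∈ Ioc p q, HasDerivWithinAt G (s z) (Ioc p q) z)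
    (hs_top : Tendsto s (𝓝[>] p) atTop) (hpy : p < y) :
    Tendsto (fun z => s z * (y - z) + G z) (𝓝[>] p) atTop := by
  obtain ⟨c, hpc, hc⟩ := exists_between (lt_min hpy hpq)
  obtain ⟨hcy, hcq⟩ := lt_min_iff.1 hc
  -- the tangent line at `z < c` lies above the graph at `c`, so its value at `y` is at
  -- least `G c + s z * (y - c)`
  refine tendsto_atTop_mono' _ ?_
    (tendsto_atTop_add_const_right _ (G c) (hs_top.atTop_mul_const (sub_pos.2 hcy)))
  filter_upwards [Ioo_mem_nhdsGT hpc] with z hz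
  have hz' : z ∈ Ioc p q := ⟨hz.1, (hz.2.trans hcq).le⟩
  linear_combination hG.le_mul_sub_add_of_hasDerivWithinAt hz' ⟨hpc, hcq.le⟩ (hs z hz')

theorem exists_mem_Ioc_tangent_eq (hpq : p < q) (hG : ConcaveOn ℝ (Ioc p q) G)
    (hs : ∀ z ∈ Ioc p q, HasDerivWithinAt G (s z) (Ioc p q) z) (hs_cont : ContinuousOn s (Ioc p q))
    (hs_top : Tendsto s (𝓝[>] p) atTop) (hpy : p < y) {v : ℝ}
    (hv : (if y < q then G y else s q * (y - q) + G q) ≤ v) :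
    ∃ z ∈ Ioc p q, v = s z * (y - z) + G z := by
  set b := min y q
  have hb : b ∈ Ioc p q := ⟨lt_min hpy hpq, min_le_right y q⟩
  have hFb : s b * (y - b) + G b = if y < q then G y else s q * (y - q) + G q := by
    split_ifs with hyq
    · rw [show b = y from min_eq_left hyq.le]
      ring
    · rw [show b = q from min_eq_right (not_lt.1 hyq)]
  have hF : ContinuousOn (fun z => s z * (y - z) + G z) (Ioc p b) :=
    ((hs_cont.mul (continuousOn_const.sub continuousOn_id)).add
      fun z hz => (hs z hz).continuousWithinAt).mono (Ioc_subset_Ioc_right hb.2)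
  have := left_nhdsWithin_Ioc_neBot hb.1
  obtain ⟨z, hz, hzv⟩ := isPreconnected_Ioc.intermediate_value_Ici (l := 𝓝[Ioc p b] p)
    (right_mem_Ioc.2 hb.1) inf_le_right hF ((tendsto_tangent_atTop hpq hG hs hs_top hpy).mono_left
      (nhdsWithin_mono _ Ioc_subset_Ioi_self)) (hFb ▸ hv : _ ≤ v)
  exact ⟨z, ⟨hz.1, hz.2.trans hb.2⟩, hzv.symm⟩

end Tangents

theorem stmt_3_general (a Da : ℝ) (ha : 0 < a) (G : ℝ → ℝ)
    (hGdiff : ∀ y ∈ Set.Ioo 0 a, DifferentiableAt ℝ G y)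
    (hGconc : StrictConcaveOn ℝ (Set.Ioo 0 a) G)
    (hDa : HasDerivWithinAt G Da (Set.Iio a) a)
    (hG'0 : Tendsto (deriv G) (𝓝[>] (0:ℝ)) atTop) :
    {p : ℝ × ℝ | 0 < p.1 ∧ ∃ z ∈ Set.Ioc 0 a,
        p.2 = (if z = a then Da else deriv G z) * (p.1 - z) + G z}
      = {p : ℝ × ℝ | 0 < p.1 ∧
          (if p.1 < a then G p.1 else Da * (p.1 - a) + G a) ≤ p.2} := by
  set s : ℝ → ℝ := fun z => if z = a then Da else deriv G z
  have hsa : s a = Da := if_pos rfl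
  have hconc : ConcaveOn ℝ (Ioc 0 a) G :=
    hGconc.concaveOn.concaveOn_Ioc_of_continuousWithinAt hDa.continuousWithinAt
  have hderiv : ∀ z ∈ Ioc 0 a, HasDerivWithinAt G (s z) (Ioc 0 a) z := by
    intro z hz
    rcases hz.2.lt_or_eq with hza | rfl
    · rw [show s z = deriv G z from if_neg hza.ne]
      exact (hGdiff z ⟨hz.1, hza⟩).hasDerivAt.hasDerivWithinAt
    · rw [hsa]
      exact (hasDerivWithinAt_Iio_iff_Iic.1 hDa).mono Ioc_subset_Iic_self
  have hs_cont : ContinuousOn s (Ioc 0 a) :=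
    continuousOn_Ioc_ite_of_tendsto ha (hGconc.continuousOn_deriv isOpen_Ioo hGdiff)
      (hconc.tendsto_deriv_nhdsLT ha hGdiff hDa)
  have hs_top : Tendsto s (𝓝[>] 0) atTop := by
    refine hG'0.congr' ?_
    filter_upwards [Ioo_mem_nhdsGT ha] with z hz
    exact (if_neg hz.2.ne).symm
  ext ⟨y, v⟩
  simp only [mem_ofPred_eq]
  constructor
  · rintro ⟨hy, z, hz, rfl⟩
    refine ⟨hy, ?_⟩
    simpa only [hsa] using envelope_le_tangent hconc hderiv hy hz
  · rintro ⟨hy, hv⟩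
    exact ⟨hy, exists_mem_Ioc_tangent_eq ha hconc hderiv hs_cont hs_top hy (by rwa [hsa])⟩

/-- The set of points on tangent lines to `G` drawn at points of `(0,a]` equals the set of
points lying (weakly) above the envelope `G̃` (which is `G` on `(0,a)` and the tangent ray
at `a⁻` afterwards). -/
theorem stmt_3 (a Da : ℝ) (ha : 0 < a) (G : ℝ → ℝ)
    (hGcont : ContinuousOn G (Set.Ici 0)) (hG0 : G 0 = 0)
    (hGdiff : ∀ y ∈ Set.Ioo 0 a, DifferentiableAt ℝ G y)
    (hGconc : StrictConcaveOn ℝ (Set.Ioo 0 a) G)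
    (hDa : HasDerivWithinAt G Da (Set.Iio a) a)
    (hG'0 : Tendsto (deriv G) (𝓝[>] (0:ℝ)) atTop) :
    {p : ℝ × ℝ | 0 < p.1 ∧ ∃ z ∈ Set.Ioc 0 a,
        p.2 = (if z = a then Da else deriv G z) * (p.1 - z) + G z}
      = {p : ℝ × ℝ | 0 < p.1 ∧
          (if p.1 < a then G p.1 else Da * (p.1 - a) + G a) ≤ p.2} :=
  stmt_3_general a Da ha G hGdiff hGconc hDa hG'0
end

section
/- Let G : (0,∞) → ℝ be differentiable except at a point a > 0, strictly concave on (0,a), and on (a,∞) there exists c ≥ a such that G is convex on (a,c) and strictly concave on (c,∞). Then the system of equations G'(z₁) = (G(z₂) - G(z₁))/(z₂ - z₁) = G'(z₂) with 0 < z₁ < a < z₂ has at most one solution (z₁,z₂). -/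
/-!
Let `(z₁, z₂)` and `(w₁, w₂)` be two solutions, so that the tangent line of `G` at `z₁` is also
tangent at `z₂`, and likewise for `w₁, w₂`. A tangent point `z₂` cannot lie in the convex stretch
`(a, c]`: the common tangent lies strictly above `G` at `a` by strict concavity on `(0, a]`, hence
also just to the right of `a`, whereas convexity on `(a, z₂]` puts the tangent at `z₂` below `G`
there. So all four points lie in the two strictly concave pieces `(0, a)` and `(c, ∞)`, where each
common tangent lies above the graph. Each line is therefore above the other at the other's two
contact points; an affine function that is `≥ 0` at `w₁, w₂` and `≤ 0` at `z₁, z₂`, with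
`w₁ < z₂` and `z₁ < w₂`, vanishes identically, so the two lines coincide, and strict concavity
leaves room for only one contact point on each piece.
-/

open Set Filter Topology

section Extension

variable {f : ℝ → ℝ} {p q : ℝ}

theorem ConvexOn.Ioc_of_continuousWithinAt (hf : ConvexOn ℝ (Ioo p q) f)
    (hq : ContinuousWithinAt f (Iio q) q) : ConvexOn ℝ (Ioc p q) f := by
  refine convexOn_of_slope_mono_adjacent (convex_Ioc p q) fun {x y z} hx hz hxy hyz => ?_
  have hxq : x < q := hxy.trans (hyz.trans_le hz.2)
  rcases hz.2.lt_or_eq with hzq | rfl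
  · exact hf.slope_mono_adjacent ⟨hx.1, hxq⟩ ⟨hz.1, hzq⟩ hxy hyz
  · have hlim : Tendsto (fun t => (f t - f y) / (t - y)) (𝓝[<] z) (𝓝 ((f z - f y) / (z - y))) :=
      ((hq.sub continuousWithinAt_const).div (continuousWithinAt_id.sub continuousWithinAt_const)
        (sub_ne_zero.2 hyz.ne')).tendsto
    refine ge_of_tendsto hlim ?_
    filter_upwards [Ioo_mem_nhdsLT hyz] with t ht
    exact hf.slope_mono_adjacent ⟨hx.1, hxq⟩ ⟨hx.1.trans (hxy.trans ht.1), ht.2⟩ hxy ht.1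

theorem StrictConvexOn.Ioc_of_continuousWithinAt (hf : StrictConvexOn ℝ (Ioo p q) f)
    (hq : ContinuousWithinAt f (Iio q) q) : StrictConvexOn ℝ (Ioc p q) f := by
  have hconv := hf.convexOn.Ioc_of_continuousWithinAt hq
  refine strictConvexOn_of_slope_strict_mono_adjacent (convex_Ioc p q)
    fun {x y z} hx hz hxy hyz => ?_
  obtain ⟨t, hyt, htz⟩ := exists_between hyz
  have hy : y ∈ Ioc p q := ⟨hx.1.trans hxy, hyz.le.trans hz.2⟩
  calc (f y - f x) / (y - x) < (f t - f y) / (t - y) :=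
        hf.slope_strict_mono_adjacent ⟨hx.1, hxy.trans (hyz.trans_le hz.2)⟩
          ⟨hy.1.trans hyt, htz.trans_le hz.2⟩ hxy hyt
    _ ≤ (f z - f y) / (z - y) := hconv.secant_mono_aux2 hy hz hyt htz

theorem StrictConcaveOn.Ioc_of_continuousWithinAt (hf : StrictConcaveOn ℝ (Ioo p q) f)
    (hq : ContinuousWithinAt f (Iio q) q) : StrictConcaveOn ℝ (Ioc p q) f := by
  simpa using (hf.neg.Ioc_of_continuousWithinAt hq.neg).neg

end Extension

section TangentLine

noncomputable def tangentLine (f : ℝ → ℝ) (x : ℝ) : ℝ → ℝ := fun y => f x + deriv f x * (y - x)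

variable {f : ℝ → ℝ} {S : Set ℝ} {x y : ℝ}

@[simp]
theorem tangentLine_self : tangentLine f x x = f x := by
  simp [tangentLine]

theorem ConvexOn.tangentLine_le (hf : ConvexOn ℝ S f) (hx : x ∈ S) (hy : y ∈ S)
    (hd : DifferentiableAt ℝ f x) : tangentLine f x y ≤ f y := by
  rcases lt_trichotomy y x with hyx | rfl | hxy
  · have h := hf.slope_le_deriv hy hx hyx hd
    rw [slope_def_field, div_le_iff₀ (sub_pos.2 hyx)] at h
    simp only [tangentLine]
    linarith
  · simp
  · have h := hf.deriv_le_slope hx hy hxy hd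
    rw [slope_def_field, le_div_iff₀ (sub_pos.2 hxy)] at h
    simp only [tangentLine]
    linarith

theorem ConcaveOn.le_tangentLine (hf : ConcaveOn ℝ S f) (hx : x ∈ S) (hy : y ∈ S)
    (hd : DifferentiableAt ℝ f x) : f y ≤ tangentLine f x y := by
  simpa [tangentLine, add_comm] using hf.neg.tangentLine_le hx hy hd.neg

theorem StrictConcaveOn.lt_tangentLine (hf : StrictConcaveOn ℝ S f) (hx : x ∈ S) (hy : y ∈ S)
    (hyx : y ≠ x) (hd : DifferentiableAt ℝ f x) : f y < tangentLine f x y := by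
  rcases hyx.lt_or_gt with hyx | hxy
  · have h := hf.deriv_lt_slope hy hx hyx hd
    rw [slope_def_field, lt_div_iff₀ (sub_pos.2 hyx)] at h
    simp only [tangentLine]
    linarith
  · have h := hf.slope_lt_deriv hx hy hxy hd
    rw [slope_def_field, div_lt_iff₀ (sub_pos.2 hxy)] at h
    simp only [tangentLine]
    linarith

theorem tangentLine_eq_of_deriv_eq_slope {x₁ x₂ : ℝ} (hne : x₁ ≠ x₂)
    (h₁ : deriv f x₁ = (f x₂ - f x₁) / (x₂ - x₁)) (h₂ : (f x₂ - f x₁) / (x₂ - x₁) = deriv f x₂) :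
    tangentLine f x₁ = tangentLine f x₂ := by
  have hx₂ : f x₂ = f x₁ + deriv f x₁ * (x₂ - x₁) := by
    rw [h₁, div_mul_cancel₀ _ (sub_ne_zero.2 hne.symm)]
    ring
  have hd : deriv f x₂ = deriv f x₁ := (h₁.trans h₂).symm
  funext y
  simp only [tangentLine, hd, hx₂]
  ring

end TangentLine

theorem tangentLine_ne_of_strictConcaveOn_of_convexOn {f : ℝ → ℝ} {p a x₁ x₂ : ℝ}
    (hconc : StrictConcaveOn ℝ (Ioc p a) f) (hconv : ConvexOn ℝ (Ioc a x₂) f)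
    (ha : ContinuousWithinAt f (Ioi a) a) (hx₁ : x₁ ∈ Ioo p a) (hx₂ : a < x₂)
    (hd₁ : DifferentiableAt ℝ f x₁) (hd₂ : DifferentiableAt ℝ f x₂) :
    tangentLine f x₁ ≠ tangentLine f x₂ := by
  intro h
  have below_at_a : f a < tangentLine f x₁ a :=
    hconc.lt_tangentLine ⟨hx₁.1, hx₁.2.le⟩ ⟨hx₁.1.trans hx₁.2, le_rfl⟩ hx₁.2.ne' hd₁
  have below_near_a : ∀ᶠ y in 𝓝[>] a, f y < tangentLine f x₁ y :=
    ha.tendsto.eventually_lt (by unfold tangentLine; fun_prop : Continuous (tangentLine f x₁)).continuousWithinAt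
      below_at_a
  obtain ⟨y, hy, hya⟩ := (below_near_a.and (Ioo_mem_nhdsGT hx₂)).exists
  have above : tangentLine f x₂ y ≤ f y :=
    hconv.tangentLine_le ⟨hx₂, le_rfl⟩ ⟨hya.1, hya.2.le⟩ hd₂
  rw [← h] at above
  linarith

theorem eq_of_tangentLine_eq_of_strictConcaveOn {f : ℝ → ℝ} {s t : Set ℝ} {z₁ z₂ w₁ w₂ : ℝ}
    (hs : StrictConcaveOn ℝ s f) (ht : StrictConcaveOn ℝ t f)
    (hz₁ : z₁ ∈ s) (hw₁ : w₁ ∈ s) (hz₂ : z₂ ∈ t) (hw₂ : w₂ ∈ t) (hzw : z₁ < w₂) (hwz : w₁ < z₂)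
    (hdz₁ : DifferentiableAt ℝ f z₁) (hdw₁ : DifferentiableAt ℝ f w₁)
    (hdz₂ : DifferentiableAt ℝ f z₂) (hdw₂ : DifferentiableAt ℝ f w₂)
    (hz : tangentLine f z₁ = tangentLine f z₂) (hw : tangentLine f w₁ = tangentLine f w₂) :
    z₁ = w₁ ∧ z₂ = w₂ := by
  have h₁ := hs.concaveOn.le_tangentLine hz₁ hw₁ hdz₁
  have h₂ := hs.concaveOn.le_tangentLine hw₁ hz₁ hdw₁
  have h₃ : f w₂ ≤ tangentLine f z₁ w₂ := hz ▸ ht.concaveOn.le_tangentLine hz₂ hw₂ hdz₂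
  have h₄ : f z₂ ≤ tangentLine f w₁ z₂ := hw ▸ ht.concaveOn.le_tangentLine hw₂ hz₂ hdw₂
  have e₃ : f w₂ = tangentLine f w₁ w₂ := by rw [hw, tangentLine_self]
  have e₄ : f z₂ = tangentLine f z₁ z₂ := by rw [hz, tangentLine_self]
  simp only [tangentLine] at h₁ h₂ h₃ h₄ e₃ e₄
  have same_slope : deriv f z₁ = deriv f w₁ := by
    apply le_antisymm
    · nlinarith
    · nlinarith
  have left : z₁ = w₁ := by
    by_contra hne
    have l₁ := hs.lt_tangentLine hz₁ hw₁ (Ne.symm hne) hdz₁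
    have l₂ := hs.lt_tangentLine hw₁ hz₁ hne hdw₁
    simp only [tangentLine, same_slope] at l₁ l₂
    linarith
  subst left
  refine ⟨rfl, ?_⟩
  by_contra hne
  have := ht.lt_tangentLine hz₂ hw₂ (Ne.symm hne) hdz₂
  rw [← hz, hw, tangentLine_self] at this
  exact this.false

/-- The system `G'(z₁) = (G(z₂)-G(z₁))/(z₂-z₁) = G'(z₂)`, `0 < z₁ < a < z₂`, has at most
one solution when `G` is strictly concave on `(0,a)`, convex on `(a,c)` and strictly
concave on `(c,∞)` (with possibly `c = ∞`, i.e. `G` convex on all of `(a,∞)`). -/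
theorem stmt_5 (a : ℝ) (ha : 0 < a) (G : ℝ → ℝ)
    (hGcont : ContinuousOn G (Set.Ioi 0))
    (hGdiff : ∀ x ∈ Set.Ioi 0, x ≠ a → DifferentiableAt ℝ G x)
    (hGconc : StrictConcaveOn ℝ (Set.Ioo 0 a) G)
    (hshape : (∃ c, a ≤ c ∧ ConvexOn ℝ (Set.Ioo a c) G ∧ StrictConcaveOn ℝ (Set.Ioi c) G)
      ∨ ConvexOn ℝ (Set.Ioi a) G) :
    ∀ z₁ z₂ w₁ w₂ : ℝ,
      (0 < z₁ ∧ z₁ < a ∧ a < z₂ ∧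
        deriv G z₁ = (G z₂ - G z₁) / (z₂ - z₁) ∧
        (G z₂ - G z₁) / (z₂ - z₁) = deriv G z₂) →
      (0 < w₁ ∧ w₁ < a ∧ a < w₂ ∧
        deriv G w₁ = (G w₂ - G w₁) / (w₂ - w₁) ∧
        (G w₂ - G w₁) / (w₂ - w₁) = deriv G w₂) →
      z₁ = w₁ ∧ z₂ = w₂ := by
  intro z₁ z₂ w₁ w₂ ⟨hz₁, hz₁a, haz₂, hz, hz'⟩ ⟨hw₁, hw₁a, haw₂, hw, hw'⟩
  have hcont : ∀ x, 0 < x → ContinuousAt G x := fun x hx => hGcont.continuousAt (Ioi_mem_nhds hx)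
  have hdiff_left : ∀ x, 0 < x → x < a → DifferentiableAt ℝ G x := fun x hx hxa =>
    hGdiff x hx hxa.ne
  have hdiff_right : ∀ x, a < x → DifferentiableAt ℝ G x := fun x hx =>
    hGdiff x (ha.trans hx) hx.ne'
  have hconc_left : StrictConcaveOn ℝ (Ioc 0 a) G :=
    hGconc.Ioc_of_continuousWithinAt (hcont a ha).continuousWithinAt
  have no_tangent_into (s : Set ℝ) (hconv : ConvexOn ℝ s G) (x₁ x₂ : ℝ) (hx₁ : 0 < x₁)
      (hx₁a : x₁ < a) (hax₂ : a < x₂) (hsub : Ioc a x₂ ⊆ s) :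
      tangentLine G x₁ ≠ tangentLine G x₂ :=
    tangentLine_ne_of_strictConcaveOn_of_convexOn hconc_left (hconv.subset hsub (convex_Ioc a x₂))
      (hcont a ha).continuousWithinAt ⟨hx₁, hx₁a⟩ hax₂ (hdiff_left x₁ hx₁ hx₁a) (hdiff_right x₂ hax₂)
  have hzT := tangentLine_eq_of_deriv_eq_slope (hz₁a.trans haz₂).ne hz hz'
  have hwT := tangentLine_eq_of_deriv_eq_slope (hw₁a.trans haw₂).ne hw hw'
  rcases hshape with ⟨c, hac, hconv, hconc_right⟩ | hconv
  · have hconv' : ConvexOn ℝ (Ioc a c) G :=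
      hconv.Ioc_of_continuousWithinAt (hcont c (ha.trans_le hac)).continuousWithinAt
    have hcz₂ : c < z₂ := not_le.1 fun h => no_tangent_into _ hconv' z₁ z₂ hz₁ hz₁a haz₂
      (Ioc_subset_Ioc_right h) hzT
    have hcw₂ : c < w₂ := not_le.1 fun h => no_tangent_into _ hconv' w₁ w₂ hw₁ hw₁a haw₂
      (Ioc_subset_Ioc_right h) hwT
    exact eq_of_tangentLine_eq_of_strictConcaveOn hGconc hconc_right ⟨hz₁, hz₁a⟩ ⟨hw₁, hw₁a⟩
      hcz₂ hcw₂ (hz₁a.trans haw₂) (hw₁a.trans haz₂) (hdiff_left z₁ hz₁ hz₁a)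
      (hdiff_left w₁ hw₁ hw₁a) (hdiff_right z₂ haz₂) (hdiff_right w₂ haw₂) hzT hwT
  · exact (no_tangent_into _ hconv z₁ z₂ hz₁ hz₁a haz₂ Ioc_subset_Ioi_self hzT).elim
end

section
/- Let G : [0,∞) → ℝ be continuous, and suppose z₁ < z₂ are such that G'(z₁) = (G(z₂)-G(z₁))/(z₂-z₁) = G'(z₂), G is concave on [0,z₁] and on [z₂,∞), and the line L(y) = G(z₁) + G'(z₁)(y - z₁) satisfies L(y) ≥ G(y) for all y ∈ [z₁,z₂]. Then the function W defined by W(y) = G(y) for y ∈ [0,z₁] ∪ [z₂,∞) and W(y) = L(y) for y ∈ (z₁,z₂) is the smallest concave function on [0,∞) that dominates G. -/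
/-!
Concavity of `G` on `[0,z₁]` and on `[z₂,∞)`, together with the common tangent condition, puts
`G` below the line `L` on both pieces; since also `L ≥ G` in between, `W ≤ L` on `[0,∞)` with
equality at `z₁` and `z₂`. A function that is concave on each side of a point and lies below a
line through its value there is concave, so gluing at `z₁` and then at `z₂` makes `W` concave.
Minimality: on `[z₁,z₂]` the function `W` is the chord of `G` between `z₁` and `z₂`, and any
concave majorant of `G` lies above that chord.
-/

open Set

theorem ConcaveOn.le_add_deriv_mul_sub {S : Set ℝ} {f : ℝ → ℝ} {b x : ℝ} (hf : ConcaveOn ℝ S f)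
    (hb : b ∈ S) (hx : x ∈ S) (hd : DifferentiableAt ℝ f b) :
    f x ≤ f b + deriv f b * (x - b) := by
  rcases lt_trichotomy x b with hxb | rfl | hbx
  · have hslope := hf.deriv_le_slope hx hb hxb hd
    rw [slope_def_field, le_div_iff₀ (sub_pos.2 hxb)] at hslope
    linarith
  · simp
  · have hslope := hf.slope_le_deriv hb hx hbx hd
    rw [slope_def_field, div_le_iff₀ (sub_pos.2 hbx)] at hslope
    linarith

theorem concaveOn_const_add_mul_sub {s : Set ℝ} (hs : Convex ℝ s) (c m z : ℝ) :
    ConcaveOn ℝ s fun y => c + m * (y - z) :=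
  ⟨hs, fun x _ y _ a b _ _ hab => le_of_eq <| by
    simp only [smul_eq_mul]
    linear_combination (c - m * z) * hab⟩

theorem concaveOn_of_inter_Iic_of_inter_Ici {s : Set ℝ} {f : ℝ → ℝ} {b m : ℝ}
    (hs : Convex ℝ s) (hb : b ∈ s) (h₁ : ConcaveOn ℝ (s ∩ Iic b) f)
    (h₂ : ConcaveOn ℝ (s ∩ Ici b) f) (hline : ∀ x ∈ s, f x ≤ f b + m * (x - b)) :
    ConcaveOn ℝ s f := by
  refine concaveOn_of_slope_anti_adjacent hs fun {x y z} hx hz hxy hyz => ?_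
  have hy : y ∈ s := hs.ordConnected.out hx hz ⟨hxy.le, hyz.le⟩
  rcases le_or_gt z b with hzb | hbz
  · exact h₁.slope_anti_adjacent ⟨hx, mem_Iic.2 (by linarith)⟩ ⟨hz, hzb⟩ hxy hyz
  rcases le_or_gt b x with hbx | hxb
  · exact h₂.slope_anti_adjacent ⟨hx, hbx⟩ ⟨hz, mem_Ici.2 (by linarith)⟩ hxy hyz
  have hlx := hline x hx
  have hly := hline y hy
  have hlz := hline z hz
  rcases lt_trichotomy y b with hyb | rfl | hby
  · set p := (f y - f x) / (y - x)
    have hp : f b - f y ≤ p * (b - y) := (div_le_iff₀ (sub_pos.2 hyb)).1 <|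
      h₁.slope_anti_adjacent ⟨hx, mem_Iic.2 (by linarith)⟩ ⟨hb, self_mem_Iic⟩ hxy hyb
    have hmp : m ≤ p := le_of_mul_le_mul_right (by linarith) (sub_pos.2 hyb)
    -- `f z` lies below the line through `(b, f b)`, whose slope `m` is at most `p`
    rw [div_le_iff₀ (sub_pos.2 hyz)]
    linarith [mul_le_mul_of_nonneg_right hmp (sub_nonneg.2 hbz.le)]
  · calc (f z - f y) / (z - y) ≤ m := (div_le_iff₀ (sub_pos.2 hyz)).2 (by linarith)
      _ ≤ (f y - f x) / (y - x) := (le_div_iff₀ (sub_pos.2 hxy)).2 (by linarith)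
  · set q := (f z - f y) / (z - y)
    have hq : q * (y - b) ≤ f y - f b := (le_div_iff₀ (sub_pos.2 hby)).1 <|
      h₂.slope_anti_adjacent ⟨hb, self_mem_Ici⟩ ⟨hz, mem_Ici.2 (by linarith)⟩ hby hyz
    have hqm : q ≤ m := le_of_mul_le_mul_right (by linarith) (sub_pos.2 hby)
    rw [le_div_iff₀ (sub_pos.2 hxy)]
    linarith [mul_le_mul_of_nonneg_right hqm (sub_nonneg.2 hxb.le)]

noncomputable def bridge (G : ℝ → ℝ) (z₁ z₂ m : ℝ) (y : ℝ) : ℝ :=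
  if y ≤ z₁ ∨ z₂ ≤ y then G y else G z₁ + m * (y - z₁)

section Bridge

variable {G : ℝ → ℝ} {z₁ z₂ m : ℝ}

theorem bridge_of_le_or_le {y : ℝ} (hy : y ≤ z₁ ∨ z₂ ≤ y) : bridge G z₁ z₂ m y = G y :=
  if_pos hy

theorem bridge_eqOn_Icc (hz₂ : G z₂ = G z₁ + m * (z₂ - z₁)) :
    EqOn (bridge G z₁ z₂ m) (fun y => G z₁ + m * (y - z₁)) (Icc z₁ z₂) := by
  intro y ⟨hy₁, hy₂⟩
  unfold bridge
  split_ifs with hy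
  · rcases hy with hy | hy
    · simp [le_antisymm hy hy₁]
    · rwa [le_antisymm hy₂ hy]
  · rfl

theorem le_bridge (hchord : ∀ y ∈ Icc z₁ z₂, G y ≤ G z₁ + m * (y - z₁)) (y : ℝ) :
    G y ≤ bridge G z₁ z₂ m y := by
  unfold bridge
  split_ifs with hy
  · exact le_rfl
  · push Not at hy
    exact hchord y ⟨hy.1.le, hy.2.le⟩

theorem bridge_le_line (hz₂ : G z₂ = G z₁ + m * (z₂ - z₁))
    (hT₁ : ∀ y ∈ Icc 0 z₁, G y ≤ G z₁ + m * (y - z₁))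
    (hT₂ : ∀ y ∈ Ici z₂, G y ≤ G z₁ + m * (y - z₁)) :
    ∀ y ∈ Ici 0, bridge G z₁ z₂ m y ≤ G z₁ + m * (y - z₁) := by
  intro y hy
  by_cases hout : y ≤ z₁ ∨ z₂ ≤ y
  · rw [bridge_of_le_or_le hout]
    exact hout.elim (fun h => hT₁ y ⟨hy, h⟩) (hT₂ y)
  · push Not at hout
    exact (bridge_eqOn_Icc hz₂ ⟨hout.1.le, hout.2.le⟩).le

theorem concaveOn_bridge (hz₁ : 0 ≤ z₁) (hz : z₁ ≤ z₂)
    (hz₂ : G z₂ = G z₁ + m * (z₂ - z₁)) (hconc₁ : ConcaveOn ℝ (Icc 0 z₁) G) (hconc₂ : ConcaveOn ℝ (Ici z₂) G)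
    (hT₁ : ∀ y ∈ Icc 0 z₁, G y ≤ G z₁ + m * (y - z₁))
    (hT₂ : ∀ y ∈ Ici z₂, G y ≤ G z₁ + m * (y - z₁)) :
    ConcaveOn ℝ (Ici 0) (bridge G z₁ z₂ m) := by
  have hline := bridge_le_line hz₂ hT₁ hT₂
  have hW₁ : bridge G z₁ z₂ m z₁ = G z₁ := bridge_of_le_or_le (Or.inl le_rfl)
  have hW₂ : bridge G z₁ z₂ m z₂ = G z₂ := bridge_of_le_or_le (Or.inr le_rfl)
  have hleft : ConcaveOn ℝ (Icc 0 z₂) (bridge G z₁ z₂ m) := by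
    refine concaveOn_of_inter_Iic_of_inter_Ici (convex_Icc 0 z₂) ⟨hz₁, hz⟩ ?_ ?_
      (m := m) fun y hy => hW₁ ▸ hline y hy.1
    · exact (hconc₁.congr fun y hy => (bridge_of_le_or_le (Or.inl hy.2)).symm).subset
        (fun y hy => ⟨hy.1.1, hy.2⟩) ((convex_Icc 0 z₂).inter (convex_Iic z₁))
    · exact ((concaveOn_const_add_mul_sub (convex_Icc z₁ z₂) _ m z₁).congr
        (bridge_eqOn_Icc hz₂).symm).subset
        (fun y hy => ⟨hy.2, hy.1.2⟩) ((convex_Icc 0 z₂).inter (convex_Ici z₁))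
  refine concaveOn_of_inter_Iic_of_inter_Ici (convex_Ici 0) (hz₁.trans hz) ?_ ?_ (m := m)
    fun y hy => (hline y hy).trans_eq (by rw [hW₂, hz₂]; ring)
  · exact hleft.subset (fun y hy => ⟨hy.1, hy.2⟩) ((convex_Ici 0).inter (convex_Iic z₂))
  · exact (hconc₂.congr fun y hy => (bridge_of_le_or_le (Or.inr hy)).symm).subset
      (fun y hy => hy.2) ((convex_Ici 0).inter (convex_Ici z₂))

theorem bridge_le_of_concaveOn (hz₁ : 0 ≤ z₁) (hz : z₁ ≤ z₂)
    (hz₂ : G z₂ = G z₁ + m * (z₂ - z₁)) {W : ℝ → ℝ} (hW : ConcaveOn ℝ (Ici 0) W)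
    (hGW : ∀ y ∈ Ici 0, G y ≤ W y) : ∀ y ∈ Ici 0, bridge G z₁ z₂ m y ≤ W y := by
  intro y hy
  by_cases hout : y ≤ z₁ ∨ z₂ ≤ y
  · exact (bridge_of_le_or_le hout).trans_le (hGW y hy)
  push Not at hout
  have hseg : y ∈ segment ℝ z₁ z₂ := segment_eq_Icc hz ▸ ⟨hout.1.le, hout.2.le⟩
  obtain ⟨a, b, ha, hb, hab, rfl⟩ := hseg
  have hz₁' : z₁ ∈ Ici (0 : ℝ) := hz₁
  have hz₂' : z₂ ∈ Ici (0 : ℝ) := hz₁.trans hz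
  calc bridge G z₁ z₂ m (a • z₁ + b • z₂) = a * G z₁ + b * G z₂ := by
        rw [bridge_eqOn_Icc hz₂ ⟨hout.1.le, hout.2.le⟩, hz₂]
        simp only [smul_eq_mul]
        linear_combination (m * z₁ - G z₁) * hab
    _ ≤ a * W z₁ + b * W z₂ := by gcongr <;> exact hGW _ ‹_›
    _ ≤ W (a • z₁ + b • z₂) := hW.2 hz₁' hz₂' ha hb hab

end Bridge

theorem stmt_6_general (z₁ z₂ : ℝ) (hz₁ : 0 < z₁) (hz : z₁ < z₂) (G : ℝ → ℝ)
    (hd₁ : DifferentiableAt ℝ G z₁) (hd₂ : DifferentiableAt ℝ G z₂)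
    (htan : deriv G z₁ = (G z₂ - G z₁) / (z₂ - z₁) ∧
      (G z₂ - G z₁) / (z₂ - z₁) = deriv G z₂)
    (hconc₁ : ConcaveOn ℝ (Set.Icc 0 z₁) G)
    (hconc₂ : ConcaveOn ℝ (Set.Ici z₂) G)
    (hchord : ∀ y ∈ Set.Icc z₁ z₂, G y ≤ G z₁ + deriv G z₁ * (y - z₁)) :
    let W : ℝ → ℝ := fun y => if y ≤ z₁ ∨ z₂ ≤ y then G y else G z₁ + deriv G z₁ * (y - z₁)
    ConcaveOn ℝ (Set.Ici 0) W ∧ (∀ y ∈ Set.Ici (0:ℝ), G y ≤ W y) ∧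
      ∀ W' : ℝ → ℝ, ConcaveOn ℝ (Set.Ici 0) W' → (∀ y ∈ Set.Ici (0:ℝ), G y ≤ W' y) →
        ∀ y ∈ Set.Ici (0:ℝ), W y ≤ W' y := by
  intro W
  obtain ⟨hslope₁, hslope₂⟩ := htan
  have hz₂ : G z₂ = G z₁ + deriv G z₁ * (z₂ - z₁) := by
    rw [hslope₁, div_mul_cancel₀ _ (sub_pos.2 hz).ne']
    ring
  have hT₁ (y : ℝ) (hy : y ∈ Icc 0 z₁) : G y ≤ G z₁ + deriv G z₁ * (y - z₁) :=
    hconc₁.le_add_deriv_mul_sub ⟨hz₁.le, le_rfl⟩ hy hd₁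
  have hT₂ (y : ℝ) (hy : y ∈ Ici z₂) : G y ≤ G z₁ + deriv G z₁ * (y - z₁) :=
    (hconc₂.le_add_deriv_mul_sub self_mem_Ici hy hd₂).trans_eq
      (by rw [← hslope₂, ← hslope₁, hz₂]; ring)
  exact ⟨concaveOn_bridge hz₁.le hz.le hz₂ hconc₁ hconc₂ hT₁ hT₂,
    fun y _ => le_bridge hchord y,
    fun _ hW' hGW' => bridge_le_of_concaveOn hz₁.le hz.le hz₂ hW' hGW'⟩

/-- The function obtained by replacing `G` on `(z₁,z₂)` with the common tangent chord is
the smallest concave majorant of `G` on `[0,∞)`. -/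
theorem stmt_6 (z₁ z₂ : ℝ) (hz₁ : 0 < z₁) (hz : z₁ < z₂) (G : ℝ → ℝ)
    (hGcont : ContinuousOn G (Set.Ici 0))
    (hd₁ : DifferentiableAt ℝ G z₁) (hd₂ : DifferentiableAt ℝ G z₂)
    (htan : deriv G z₁ = (G z₂ - G z₁) / (z₂ - z₁) ∧
      (G z₂ - G z₁) / (z₂ - z₁) = deriv G z₂)
    (hconc₁ : ConcaveOn ℝ (Set.Icc 0 z₁) G)
    (hconc₂ : ConcaveOn ℝ (Set.Ici z₂) G)
    (hchord : ∀ y ∈ Set.Icc z₁ z₂, G y ≤ G z₁ + deriv G z₁ * (y - z₁)) :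
    let W : ℝ → ℝ := fun y => if y ≤ z₁ ∨ z₂ ≤ y then G y else G z₁ + deriv G z₁ * (y - z₁)
    ConcaveOn ℝ (Set.Ici 0) W ∧ (∀ y ∈ Set.Ici (0:ℝ), G y ≤ W y) ∧
      ∀ W' : ℝ → ℝ, ConcaveOn ℝ (Set.Ici 0) W' → (∀ y ∈ Set.Ici (0:ℝ), G y ≤ W' y) →
        ∀ y ∈ Set.Ici (0:ℝ), W y ≤ W' y :=
  stmt_6_general z₁ z₂ hz₁ hz G hd₁ hd₂ htan hconc₁ hconc₂ hchord
end

section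
/- Let G : (0,∞) → ℝ be differentiable with G' nonnegative, and suppose there exist finite limits limsup_{x→∞} g'(x)/ψ'(x) = limsup_{x→∞} g(x)/ψ(x) = L∞ < ∞, where G'(F(x)) = (g'(x)φ(x) - g(x)φ'(x))/(ψ'(x)φ(x) - ψ(x)φ'(x)) with ψ' > 0, φ > 0, φ' < 0, ψ > 0. Then limsup_{x→∞} G'(F(x)) ≤ 2L∞. In particular G' is bounded above near infinity. -/
/-!
Writing `G'(F x)` as `(g'φ + g(-φ')) / (ψ'φ + ψ(-φ'))`, with all four products nonnegative and
the two in the denominator positive, the elementary bound `(a + b) / (c + d) ≤ a / c + b / d`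
gives `G'(F x) ≤ g'/ψ' + g/ψ` for `x > 0`. Taking `limsup` and using subadditivity of `limsup`
yields `limsup G'(F x) ≤ L∞ + L∞`; boundedness of the right-hand side gives the upper bound.
-/

open Set Filter

theorem add_div_add_le_div_add_div {K : Type*} [Field K] [LinearOrder K] [IsStrictOrderedRing K]
    {a b c d : K} (ha : 0 ≤ a) (hb : 0 ≤ b) (hc : 0 < c) (hd : 0 < d) :
    (a + b) / (c + d) ≤ a / c + b / d := by
  rw [add_div]
  gcongr <;> linarith

section Quotient

variable {g g' ψ ψ' φ φ' : ℝ}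

theorem mul_sub_mul_div_mul_sub_mul_nonneg (hg : 0 ≤ g) (hg' : 0 ≤ g') (hψ : 0 < ψ)
    (hψ' : 0 < ψ') (hφ : 0 < φ) (hφ' : φ' < 0) :
    0 ≤ (g' * φ - g * φ') / (ψ' * φ - ψ * φ') :=
  div_nonneg (by nlinarith) (by nlinarith)

theorem mul_sub_mul_div_mul_sub_mul_le (hg : 0 ≤ g) (hg' : 0 ≤ g') (hψ : 0 < ψ)
    (hψ' : 0 < ψ') (hφ : 0 < φ) (hφ' : φ' < 0) :
    (g' * φ - g * φ') / (ψ' * φ - ψ * φ') ≤ g' / ψ' + g / ψ := by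
  have hφ'' : 0 < -φ' := neg_pos.2 hφ'
  calc (g' * φ - g * φ') / (ψ' * φ - ψ * φ')
      = (g' * φ + g * -φ') / (ψ' * φ + ψ * -φ') := by ring
    _ ≤ g' * φ / (ψ' * φ) + g * -φ' / (ψ * -φ') :=
        add_div_add_le_div_add_div (by positivity) (by positivity) (by positivity) (by positivity)
    _ = g' / ψ' + g / ψ := by
        rw [mul_div_mul_right _ _ hφ.ne', mul_div_mul_right _ _ hφ''.ne']

end Quotient

theorem Filter.limsup_le_limsup_add_limsup_of_le_add {ι α : Type*} [AddCommGroup α]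
    [ConditionallyCompleteLinearOrder α] [DenselyOrdered α] [AddLeftMono α]
    {f : Filter ι} [f.NeBot] {u v w : ι → α} (h : u ≤ᶠ[f] v + w)
    (hu : IsCoboundedUnder (· ≤ ·) f u)
    (hv₁ : IsBoundedUnder (· ≥ ·) f v) (hv₂ : IsBoundedUnder (· ≤ ·) f v)
    (hw₁ : IsCoboundedUnder (· ≤ ·) f w) (hw₂ : IsBoundedUnder (· ≤ ·) f w) :
    limsup u f ≤ limsup v f + limsup w f :=
  (limsup_le_limsup h hu (isBoundedUnder_le_add hv₂ hw₂)).trans (limsup_add_le hv₁ hv₂ hw₁ hw₂)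

theorem stmt_13_general (Linf : ℝ) (g ψ φ F G : ℝ → ℝ)
    (hg0 : ∀ x ∈ Set.Ioi 0, 0 ≤ g x) (hg' : ∀ x ∈ Set.Ioi 0, 0 ≤ deriv g x)
    (hψpos : ∀ x ∈ Set.Ioi 0, 0 < ψ x) (hψ' : ∀ x ∈ Set.Ioi 0, 0 < deriv ψ x)
    (hφpos : ∀ x ∈ Set.Ioi 0, 0 < φ x) (hφ' : ∀ x ∈ Set.Ioi 0, deriv φ x < 0)
    (hbdd1 : IsBoundedUnder (· ≤ ·) atTop (fun x => g x / ψ x))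
    (hbdd2 : IsBoundedUnder (· ≤ ·) atTop (fun x => deriv g x / deriv ψ x))
    (hL1 : limsup (fun x => g x / ψ x) atTop = Linf)
    (hL2 : limsup (fun x => deriv g x / deriv ψ x) atTop = Linf)
    (hG : ∀ x ∈ Set.Ioi 0,
      deriv G (F x) = (deriv g x * φ x - g x * deriv φ x)
        / (deriv ψ x * φ x - ψ x * deriv φ x)) :
    limsup (fun x => deriv G (F x)) atTop ≤ 2 * Linf ∧
      ∃ M : ℝ, ∀ᶠ x in atTop, deriv G (F x) ≤ M := by
  have hpos : ∀ᶠ x : ℝ in atTop, x ∈ Ioi 0 := eventually_gt_atTop 0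
  have hG_nonneg : ∀ᶠ x in atTop, 0 ≤ deriv G (F x) := hpos.mono fun x hx => by
    rw [hG x hx]
    exact mul_sub_mul_div_mul_sub_mul_nonneg (hg0 x hx) (hg' x hx) (hψpos x hx) (hψ' x hx)
      (hφpos x hx) (hφ' x hx)
  have hG_le : ∀ᶠ x in atTop, deriv G (F x) ≤ deriv g x / deriv ψ x + g x / ψ x :=
    hpos.mono fun x hx => by
      rw [hG x hx]
      exact mul_sub_mul_div_mul_sub_mul_le (hg0 x hx) (hg' x hx) (hψpos x hx) (hψ' x hx)
        (hφpos x hx) (hφ' x hx)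
  have hratio : ∀ᶠ x in atTop, 0 ≤ g x / ψ x :=
    hpos.mono fun x hx => div_nonneg (hg0 x hx) (hψpos x hx).le
  have hratio' : ∀ᶠ x in atTop, 0 ≤ deriv g x / deriv ψ x :=
    hpos.mono fun x hx => div_nonneg (hg' x hx) (hψ' x hx).le
  refine ⟨?_, ((isBoundedUnder_le_add hbdd2 hbdd1).mono_le hG_le).eventually_le⟩
  calc limsup (fun x => deriv G (F x)) atTop
      ≤ limsup (fun x => deriv g x / deriv ψ x) atTop + limsup (fun x => g x / ψ x) atTop :=
        limsup_le_limsup_add_limsup_of_le_add hG_le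
          (isCoboundedUnder_le_of_eventually_le atTop hG_nonneg)
          (isBoundedUnder_of_eventually_ge hratio') hbdd2
          (isCoboundedUnder_le_of_eventually_le atTop hratio) hbdd1
    _ = 2 * Linf := by rw [hL1, hL2, two_mul]

/-- If `limsup g/ψ = limsup g'/ψ' = L∞ < ∞`, then
`limsup_{x→∞} G'(F(x)) ≤ 2L∞`, where
`G'(F(x)) = (g'φ - gφ')/(ψ'φ - ψφ')`; in particular `G'∘F` is bounded above near `∞`. -/
theorem stmt_13 (Linf : ℝ) (g ψ φ F G : ℝ → ℝ)
    (hg0 : ∀ x ∈ Set.Ioi 0, 0 ≤ g x) (hg' : ∀ x ∈ Set.Ioi 0, 0 ≤ deriv g x)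
    (hψpos : ∀ x ∈ Set.Ioi 0, 0 < ψ x) (hψ' : ∀ x ∈ Set.Ioi 0, 0 < deriv ψ x)
    (hφpos : ∀ x ∈ Set.Ioi 0, 0 < φ x) (hφ' : ∀ x ∈ Set.Ioi 0, deriv φ x < 0)
    (hgd : ∀ x ∈ Set.Ioi 0, DifferentiableAt ℝ g x)
    (hψd : ∀ x ∈ Set.Ioi 0, DifferentiableAt ℝ ψ x)
    (hφd : ∀ x ∈ Set.Ioi 0, DifferentiableAt ℝ φ x)
    (hF : ∀ x ∈ Set.Ioi 0, F x = ψ x / φ x)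
    (hFmono : StrictMonoOn F (Set.Ioi 0)) (hFtop : Tendsto F atTop atTop)
    (hbdd1 : IsBoundedUnder (· ≤ ·) atTop (fun x => g x / ψ x))
    (hbdd2 : IsBoundedUnder (· ≤ ·) atTop (fun x => deriv g x / deriv ψ x))
    (hL1 : limsup (fun x => g x / ψ x) atTop = Linf)
    (hL2 : limsup (fun x => deriv g x / deriv ψ x) atTop = Linf)
    (hG : ∀ x ∈ Set.Ioi 0,
      deriv G (F x) = (deriv g x * φ x - g x * deriv φ x)
        / (deriv ψ x * φ x - ψ x * deriv φ x)) :
    limsup (fun x => deriv G (F x)) atTop ≤ 2 * Linf ∧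
      ∃ M : ℝ, ∀ᶠ x in atTop, deriv G (F x) ≤ M :=
  stmt_13_general Linf g ψ φ F G hg0 hg' hψpos hψ' hφpos hφ' hbdd1 hbdd2 hL1 hL2 hG
end

section
/- Let H : (0,B) → ℝ be continuous, with a point y_h ∈ (0,B) where H attains its maximum and H'(y_h) = 0, H strictly concave on (y_h, y_H) for some y_H ∈ (y_h, B], H' (one-sided at y_H) negative on (y_h,y_H], and suppose the point (B, 0) lies on or above the tangent line of H at y_H (using the left derivative). Then there exists a unique z₀ ∈ [y_h, y_H] solving H'(z₀) = -H(z₀)/(B - z₀), i.e. the tangent line of H at z₀ passes through (B,0). -/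
open Set

/-!
The value at `B` of the tangent line at `z`, `g z = H' z * (B - z) + H z`, is strictly
decreasing on `[y_h, y_H]` because `H'` lies strictly between the chord slopes of the strictly
concave `H`; this gives uniqueness. For existence, `g y_h = H y_h > 0` and `g y_H ≤ 0`, and
`g z / (B - z) ^ 2` is the derivative of `H z / (B - z)`, so Darboux's theorem provides a zero
of `g` even though `H'` need not be continuous.
-/

theorem strictAntiOn_tangent_value {s : Set ℝ} {f f' : ℝ → ℝ} {B : ℝ} (hsB : ∀ x ∈ s, x ≤ B)
    (hslope : ∀ x ∈ s, ∀ y ∈ s, x < y → f' y < slope f x y ∧ slope f x y < f' x) :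
    StrictAntiOn (fun z => f' z * (B - z) + f z) s := by
  intro x hx y hy hxy
  obtain ⟨hy', hx'⟩ := hslope x hx y hy hxy
  have hchord : f y - f x < f' x * (y - x) := by
    rwa [slope_def_field, div_lt_iff₀ (sub_pos.2 hxy)] at hx'
  nlinarith [mul_nonneg (sub_nonneg.2 (hsB y hy)) (sub_pos.2 (hy'.trans hx')).le]

theorem StrictConcaveOn.ite_deriv_lt_slope {f : ℝ → ℝ} {a b D : ℝ}
    (hf : StrictConcaveOn ℝ (Icc a b) f) (hdiff : ∀ x ∈ Ico a b, DifferentiableAt ℝ f x)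
    (hD : HasDerivWithinAt f D (Iio b) b) :
    ∀ x ∈ Icc a b, ∀ y ∈ Icc a b, x < y →
      (if y = b then D else deriv f y) < slope f x y ∧
        slope f x y < (if x = b then D else deriv f x) := by
  intro x hx y hy hxy
  rw [if_neg (hxy.trans_le hy.2).ne]
  refine ⟨?_, hf.slope_lt_deriv hx hy hxy (hdiff x ⟨hx.1, hxy.trans_le hy.2⟩)⟩
  split_ifs with hyb
  · subst hyb
    exact hf.lt_slope_of_hasDerivWithinAt_Iio hx hy hxy hD
  · exact hf.deriv_lt_slope hx hy hxy (hdiff y ⟨hy.1, hy.2.lt_of_ne hyb⟩)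

theorem hasDerivWithinAt_Iic_ite_deriv {f : ℝ → ℝ} {a b D : ℝ}
    (hdiff : ∀ x ∈ Ico a b, DifferentiableAt ℝ f x) (hD : HasDerivWithinAt f D (Iio b) b) :
    ∀ x ∈ Icc a b, HasDerivWithinAt f (if x = b then D else deriv f x) (Iic b) x := by
  intro x hx
  split_ifs with hxb
  · subst hxb
    exact hasDerivWithinAt_Iio_iff_Iic.1 hD
  · exact (hdiff x ⟨hx.1, hx.2.lt_of_ne hxb⟩).hasDerivAt.hasDerivWithinAt

theorem exists_tangent_through_eq_zero {f f' : ℝ → ℝ} {a b B : ℝ} (hab : a ≤ b) (hbB : b < B)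
    (hf : ∀ x ∈ Icc a b, HasDerivWithinAt f (f' x) (Icc a b) x)
    (ha : 0 < f' a * (B - a) + f a) (hb : f' b * (B - b) + f b < 0) :
    ∃ c ∈ Ioo a b, f' c * (B - c) + f c = 0 := by
  have hB : ∀ x ∈ Icc a b, 0 < B - x := fun x hx => sub_pos.2 (hx.2.trans_lt hbB)
  have hquot : ∀ x ∈ Icc a b, HasDerivWithinAt (fun z => f z / (B - z))
      ((f' x * (B - x) + f x) / (B - x) ^ 2) (Icc a b) x := by
    intro x hx
    have hden : HasDerivWithinAt (fun z => B - z) (-1) (Icc a b) x := by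
      simpa using (hasDerivWithinAt_id x _).const_sub B
    exact ((hf x hx).div hden (hB x hx).ne').congr_deriv (by ring)
  obtain ⟨c, hc, hc0⟩ := exists_hasDerivWithinAt_eq_of_lt_of_gt hab hquot
    (div_pos ha (pow_pos (hB a ⟨le_rfl, hab⟩) 2))
    (div_neg_of_neg_of_pos hb (pow_pos (hB b ⟨hab, le_rfl⟩) 2))
  refine ⟨c, hc, ?_⟩
  simpa [(hB c (Ioo_subset_Icc_self hc)).ne'] using hc0

theorem StrictConcaveOn.exists_tangent_through {f : ℝ → ℝ} {a b B D : ℝ} (hab : a < b)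
    (hbB : b ≤ B) (hf : StrictConcaveOn ℝ (Icc a b) f)
    (hdiff : ∀ x ∈ Ico a b, DifferentiableAt ℝ f x) (hD : HasDerivWithinAt f D (Iio b) b)
    (ha : 0 < f a) (h'a : deriv f a = 0) (hb : D * (B - b) + f b ≤ 0) :
    ∃ z ∈ Icc a b, (if z = b then D else deriv f z) * (B - z) + f z = 0 := by
  set g : ℝ → ℝ := fun z => if z = b then D else deriv f z with hg
  have hga : g a = 0 := by simp [hg, hab.ne, h'a]
  rcases hb.lt_or_eq with hb | hb
  swap
  · exact ⟨b, right_mem_Icc.2 hab.le, by simpa [hg] using hb⟩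
  obtain ⟨c, hc, hcB, hgc⟩ : ∃ c ∈ Ioc a b, c < B ∧ g c * (B - c) + f c < 0 := by
    rcases hbB.lt_or_eq with hbB | rfl
    · exact ⟨b, right_mem_Ioc.2 hab, hbB, by simpa [hg] using hb⟩
    -- With `b = B` the quotient in Darboux's argument blows up at `b`, so move left to a point
    -- `c` where `f c < 0`; there the tangent value is negative too, as `deriv f c < deriv f a = 0`.
    have hfb : f b < 0 := by simpa using hb
    obtain ⟨c, hfc, hc⟩ := ((hD.continuousWithinAt.eventually_lt_const hfb).and
      (Ioo_mem_nhdsLT_of_mem ⟨hab, le_rfl⟩)).exists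
    obtain ⟨hgc_lt, hlt_ga⟩ := hf.ite_deriv_lt_slope hdiff hD a (left_mem_Icc.2 hab.le) c
      (Ioo_subset_Icc_self hc) hc.1
    have hgc : g c < 0 := hga ▸ hgc_lt.trans hlt_ga
    exact ⟨c, Ioo_subset_Ioc_self hc, hc.2, by nlinarith [sub_pos.2 hc.2]⟩
  have hderiv : ∀ x ∈ Icc a c, HasDerivWithinAt f (g x) (Icc a c) x := fun x hx =>
    (hasDerivWithinAt_Iic_ite_deriv hdiff hD x ⟨hx.1, hx.2.trans hc.2⟩).mono
      (Icc_subset_Iic_self.trans (Iic_subset_Iic.2 hc.2))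
  obtain ⟨z, hz, hz0⟩ := exists_tangent_through_eq_zero hc.1.le hcB hderiv
    (by simpa [hga] using ha) hgc
  exact ⟨z, ⟨hz.1.le, hz.2.le.trans hc.2⟩, hz0⟩

theorem stmt_16_general (B yh yH DH : ℝ) (hyh : 0 < yh) (hyhH : yh < yH)
    (hyHB : yH ≤ B) (H : ℝ → ℝ)
    (hHdiff : ∀ y ∈ Set.Ioo 0 yH, DifferentiableAt ℝ H y)
    (hDH : HasDerivWithinAt H DH (Set.Iio yH) yH)
    (hHyh : 0 < H yh) (hH'yh : deriv H yh = 0)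
    (hconc : StrictConcaveOn ℝ (Set.Icc yh yH) H)
    (htangB : DH * (B - yH) + H yH ≤ 0) :
    ∃! z₀, z₀ ∈ Set.Icc yh yH ∧
      (if z₀ = yH then DH else deriv H z₀) * (B - z₀) + H z₀ = 0 := by
  have hdiff : ∀ x ∈ Ico yh yH, DifferentiableAt ℝ H x := fun x hx =>
    hHdiff x ⟨hyh.trans_le hx.1, hx.2⟩
  have hanti : StrictAntiOn (fun z => (if z = yH then DH else deriv H z) * (B - z) + H z)
      (Icc yh yH) :=
    strictAntiOn_tangent_value (fun x hx => hx.2.trans hyHB)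
      (hconc.ite_deriv_lt_slope hdiff hDH)
  obtain ⟨z₀, hz₀, hz₀0⟩ := hconc.exists_tangent_through hyhH hyHB hdiff hDH hHyh hH'yh htangB
  exact ⟨z₀, ⟨hz₀, hz₀0⟩, fun z ⟨hz, hz0⟩ => hanti.injOn hz hz₀ (hz0.trans hz₀0.symm)⟩

/-- Existence and uniqueness of the tangency point `z₀ ∈ [y_h, y_H]` whose tangent line
passes through `(B, 0)`, i.e. `H'(z₀)(B - z₀) + H(z₀) = 0`. -/
theorem stmt_16 (B yh yH DH : ℝ) (hB : 0 < B) (hyh : 0 < yh) (hyhH : yh < yH)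
    (hyHB : yH ≤ B) (H : ℝ → ℝ)
    (hHcont : ContinuousOn H (Set.Ioc 0 B))
    (hHdiff : ∀ y ∈ Set.Ioo 0 yH, DifferentiableAt ℝ H y)
    (hDH : HasDerivWithinAt H DH (Set.Iio yH) yH)
    (hHyh : 0 < H yh) (hH'yh : deriv H yh = 0)
    (hconc : StrictConcaveOn ℝ (Set.Icc yh yH) H)
    (hneg : (∀ y ∈ Set.Ioo yh yH, deriv H y < 0) ∧ DH < 0)
    (htangB : DH * (B - yH) + H yH ≤ 0) :
    ∃! z₀, z₀ ∈ Set.Icc yh yH ∧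
      (if z₀ = yH then DH else deriv H z₀) * (B - z₀) + H z₀ = 0 :=
  stmt_16_general B yh yH DH hyh hyhH hyHB H hHdiff hDH hHyh hH'yh hconc htangB
end
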